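/- arXiv:1502.05618 — 6 statements merged into one kernel-verified Lean document; each statement's English description precedes it below -/
import Mathlib

section
/- Any two countably infinite models of the Rado multigraph axioms (A0)-(A4) are isomorphic. -/
/-!
Back and forth. A finite set of pairs `(a, b)` on which `a ↦ b` is a bijection preserving edge
multiplicities can be extended to any new vertex on either side: the extension property of the
other model provides a fresh vertex with exactly the multiplicities required towards the finitely
many vertices already matched. Enumerating both countable vertex sets and alternating the two kinds
of extension, the union of the resulting chain is an isomorphism.
-/

open Function

namespace Multigraph

variable {V W : Type*}

def HasExtensionProperty (μ : V → V → ℕ) : Prop :=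
  ∀ (n : ℕ) (u : Fin n → V), Injective u →
    ∀ m : Fin n → ℕ, ∃ v : V, (∀ i, v ≠ u i) ∧ ∀ i, μ (u i) v = m i

theorem HasExtensionProperty.exists_of_finite {μ : V → V → ℕ} (h : HasExtensionProperty μ)
    {ι : Type*} [Finite ι] {u : ι → V} (hu : Injective u) (m : ι → ℕ) :
    ∃ v : V, (∀ i, v ≠ u i) ∧ ∀ i, μ (u i) v = m i := by
  obtain ⟨n, ⟨e⟩⟩ := Finite.exists_equiv_fin ι
  obtain ⟨v, hvu, hvm⟩ := h n (u ∘ e.symm) (hu.comp e.symm.injective) (m ∘ e.symm)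
  exact ⟨v, fun i => by simpa using hvu (e i), fun i => by simpa using hvm (e i)⟩

def IsPartialIso (μ : V → V → ℕ) (ν : W → W → ℕ) (s : Set (V × W)) : Prop :=
  ∀ p ∈ s, ∀ q ∈ s, (p.1 = q.1 ↔ p.2 = q.2) ∧ ν p.2 q.2 = μ p.1 q.1

namespace IsPartialIso

variable {μ : V → V → ℕ} {ν : W → W → ℕ} {s : Set (V × W)}

theorem empty : IsPartialIso μ ν ∅ := by simp [IsPartialIso]

theorem swap (hs : IsPartialIso μ ν s) : IsPartialIso ν μ (Prod.swap ⁻¹' s) :=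
  fun _ hp _ hq => ⟨(hs _ hp _ hq).1.symm, (hs _ hp _ hq).2.symm⟩

theorem iUnion {ι : Type*} {s : ι → Set (V × W)} (hdir : Directed (· ⊆ ·) s)
    (hs : ∀ i, IsPartialIso μ ν (s i)) : IsPartialIso μ ν (⋃ i, s i) := by
  intro p hp q hq
  obtain ⟨i, hp⟩ := Set.mem_iUnion.1 hp
  obtain ⟨j, hq⟩ := Set.mem_iUnion.1 hq
  obtain ⟨k, hik, hjk⟩ := hdir i j
  exact hs k p (hik hp) q (hjk hq)

theorem exists_insert_left (hμsymm : ∀ x y, μ x y = μ y x) (hμirr : ∀ x, μ x x = 0)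
    (hνsymm : ∀ x y, ν x y = ν y x) (hνirr : ∀ x, ν x x = 0) (hν : HasExtensionProperty ν)
    (hs : IsPartialIso μ ν s) (hfin : s.Finite) (a : V) :
    ∃ b, IsPartialIso μ ν (insert (a, b) s) := by
  by_cases ha : ∃ b, (a, b) ∈ s
  · obtain ⟨b, hb⟩ := ha
    exact ⟨b, by rwa [Set.insert_eq_of_mem hb]⟩
  push Not at ha
  have := hfin.to_subtype
  obtain ⟨b, hbs, hbν⟩ := hν.exists_of_finite (u := fun p : s => p.1.2)
    (fun p q h => Subtype.ext (Prod.ext ((hs _ p.2 _ q.2).1.2 h) h)) (fun p => μ p.1.1 a)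
  have hnew : ∀ p ∈ s, (p.1 = a ↔ p.2 = b) ∧ ν p.2 b = μ p.1 a := fun p hp =>
    ⟨iff_of_false (fun h => ha p.2 (h ▸ hp)) (fun h => hbs ⟨p, hp⟩ h.symm), hbν ⟨p, hp⟩⟩
  refine ⟨b, ?_⟩
  rintro p (rfl | hp) q (rfl | hq)
  · simp [hμirr, hνirr]
  · obtain ⟨hiff, hmul⟩ := hnew q hq
    exact ⟨eq_comm.trans (hiff.trans eq_comm), by rw [hνsymm, hmul, hμsymm]⟩
  · exact hnew p hp
  · exact hs p hp q hq

theorem exists_insert_right (hμsymm : ∀ x y, μ x y = μ y x) (hμirr : ∀ x, μ x x = 0)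
    (hνsymm : ∀ x y, ν x y = ν y x) (hνirr : ∀ x, ν x x = 0) (hμ : HasExtensionProperty μ)
    (hs : IsPartialIso μ ν s) (hfin : s.Finite) (b : W) :
    ∃ a, IsPartialIso μ ν (insert (a, b) s) := by
  obtain ⟨a, ha⟩ := hs.swap.exists_insert_left hνsymm hνirr hμsymm hμirr hμ
    (hfin.preimage Prod.swap_injective.injOn) b
  refine ⟨a, ?_⟩
  convert ha.swap using 1
  ext ⟨x, y⟩
  simp [and_comm]

theorem exists_equiv (hs : IsPartialIso μ ν s) (hdom : ∀ a, ∃ b, (a, b) ∈ s)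
    (hcod : ∀ b, ∃ a, (a, b) ∈ s) : ∃ e : V ≃ W, ∀ x y, ν (e x) (e y) = μ x y := by
  choose f hf using hdom
  choose g hg using hcod
  exact ⟨⟨f, g, fun a => (hs _ (hg (f a)) _ (hf a)).1.2 rfl,
    fun b => (hs _ (hf (g b)) _ (hg b)).1.1 rfl⟩, fun x y => (hs _ (hf x) _ (hf y)).2⟩

end IsPartialIso

abbrev FinitePartialIso (μ : V → V → ℕ) (ν : W → W → ℕ) : Type _ :=
  {s : Set (V × W) // s.Finite ∧ IsPartialIso μ ν s}

variable {μ : V → V → ℕ} {ν : W → W → ℕ}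

theorem exists_equiv_of_back_and_forth [Countable V] [Countable W]
    (hleft : ∀ s : Set (V × W), s.Finite → IsPartialIso μ ν s →
      ∀ a, ∃ b, IsPartialIso μ ν (insert (a, b) s))
    (hright : ∀ s : Set (V × W), s.Finite → IsPartialIso μ ν s →
      ∀ b, ∃ a, IsPartialIso μ ν (insert (a, b) s)) :
    ∃ e : V ≃ W, ∀ x y, ν (e x) (e y) = μ x y := by
  have := Encodable.ofCountable V
  have := Encodable.ofCountable W
  let D : V ⊕ W → Order.Cofinal (FinitePartialIso μ ν)
    | .inl a => ⟨{f | ∃ b, (a, b) ∈ f.1}, fun f => by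
        obtain ⟨b, hb⟩ := hleft f.1 f.2.1 f.2.2 a
        exact ⟨⟨_, f.2.1.insert _, hb⟩, ⟨b, Set.mem_insert _ _⟩, Set.subset_insert _ _⟩⟩
    | .inr b => ⟨{f | ∃ a, (a, b) ∈ f.1}, fun f => by
        obtain ⟨a, ha⟩ := hright f.1 f.2.1 f.2.2 b
        exact ⟨⟨_, f.2.1.insert _, ha⟩, ⟨a, Set.mem_insert _ _⟩, Set.subset_insert _ _⟩⟩
  -- Rasiowa–Sikorski: a directed family of finite partial isomorphisms meeting every `D i`.
  let I := Order.idealOfCofinals ⟨∅, Set.finite_empty, .empty⟩ D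
  have hdir : Directed (· ⊆ ·) fun f : I => f.1.1 :=
    I.directed.directed_val.mono_comp _ fun _ _ h => h
  refine IsPartialIso.exists_equiv (.iUnion hdir fun f => f.1.2.2) (fun a => ?_) (fun b => ?_)
  · obtain ⟨f, ⟨b, hb⟩, hf⟩ := Order.cofinal_meets_idealOfCofinals _ D (.inl a)
    exact ⟨b, Set.mem_iUnion.2 ⟨⟨f, hf⟩, hb⟩⟩
  · obtain ⟨f, ⟨a, ha⟩, hf⟩ := Order.cofinal_meets_idealOfCofinals _ D (.inr b)
    exact ⟨a, Set.mem_iUnion.2 ⟨⟨f, hf⟩, ha⟩⟩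

end Multigraph

/-- `E_j(u, v)` is encoded as `j ≤ μ u v`, which makes (A0), (A2) and (A3) automatic. -/
theorem rado_multigraph_categorical_general
    (V W : Type) [Countable V] [Countable W]
    (μ : V → V → ℕ) (ν : W → W → ℕ)
    (hμsymm : ∀ x y, μ x y = μ y x) (hμirr : ∀ x, μ x x = 0)
    (hνsymm : ∀ x y, ν x y = ν y x) (hνirr : ∀ x, ν x x = 0)
    (hμext : ∀ (n : ℕ) (u : Fin n → V), Function.Injective u →
      ∀ m : Fin n → ℕ, ∃ v : V, (∀ i, v ≠ u i) ∧ ∀ i, μ (u i) v = m i)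
    (hνext : ∀ (n : ℕ) (u : Fin n → W), Function.Injective u →
      ∀ m : Fin n → ℕ, ∃ v : W, (∀ i, v ≠ u i) ∧ ∀ i, ν (u i) v = m i) :
    ∃ e : V ≃ W, ∀ x y, ν (e x) (e y) = μ x y :=
  Multigraph.exists_equiv_of_back_and_forth
    (fun _ hfin hs => hs.exists_insert_left hμsymm hμirr hνsymm hνirr hνext hfin)
    (fun _ hfin hs => hs.exists_insert_right hμsymm hμirr hνsymm hνirr hμext hfin)

/-- A countable model of the Rado multigraph axioms (A0)-(A4), encoded by its
symmetric edge-multiplicity function `μ : V → V → ℕ` (so `E_j(u,v)` means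
`j ≤ μ u v`; axioms (A0), (A2), (A3) are then automatic).  (A1) corresponds to
symmetry and irreflexivity (`μ v v = 0`), and (A4) is the extension property. -/
theorem rado_multigraph_categorical
    (V W : Type) [Countable V] [Infinite V] [Countable W] [Infinite W]
    (μ : V → V → ℕ) (ν : W → W → ℕ)
    (hμsymm : ∀ x y, μ x y = μ y x) (hμirr : ∀ x, μ x x = 0)
    (hνsymm : ∀ x y, ν x y = ν y x) (hνirr : ∀ x, ν x x = 0)
    (hμext : ∀ (n : ℕ) (u : Fin n → V), Function.Injective u →
      ∀ m : Fin n → ℕ, ∃ v : V, (∀ i, v ≠ u i) ∧ ∀ i, μ (u i) v = m i)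
    (hνext : ∀ (n : ℕ) (u : Fin n → W), Function.Injective u →
      ∀ m : Fin n → ℕ, ∃ v : W, (∀ i, v ≠ u i) ∧ ∀ i, ν (u i) v = m i) :
    ∃ e : V ≃ W, ∀ x y, ν (e x) (e y) = μ x y :=
  rado_multigraph_categorical_general V W μ ν hμsymm hμirr hνsymm hνirr hμext hνext
end

section
/- The Rado multigraph is ultrahomogeneous: any isomorphism between finite induced sub-multigraphs of a countable model of the Rado multigraph axioms extends to an automorphism of the whole structure. -/
/-!
Back and forth. Finite partial isomorphisms, encoded as finite sets of pairs, are ordered by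
inclusion. The extension property lets one add any vertex `w` to the domain of such a `p`:
send it to a new vertex `v` whose multiplicities to the image of `p` are those of `w` to the
domain. Applied to `p` and to its inverse, this makes "`x` is in the domain" and "`y` is in the
image" cofinal conditions, so by the Rasiowa–Sikorski lemma (`V` being countable) some ideal
above the given isomorphism meets all of them, and the union of that ideal is an automorphism.
-/

section PartialIso

variable {V α : Type*} (μ : V → V → α)

def IsFinPartialIso (p : Finset (V × V)) : Prop :=
  ∀ a ∈ p, ∀ b ∈ p, (a.1 = b.1 ↔ a.2 = b.2) ∧ μ a.2 b.2 = μ a.1 b.1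

abbrev FinPartialIso := {p : Finset (V × V) // IsFinPartialIso μ p}

def HasForthProperty : Prop :=
  ∀ p : FinPartialIso μ, ∀ x, ∃ q, p ≤ q ∧ ∃ y, (x, y) ∈ q.1

def HasExtensionProperty : Prop :=
  ∀ (n : ℕ) (u : Fin n → V), Function.Injective u →
    ∀ m : Fin n → α, ∃ v : V, (∀ i, v ≠ u i) ∧ ∀ i, μ (u i) v = m i

variable {μ}

namespace IsFinPartialIso

lemma map_prodComm {p : Finset (V × V)} (hp : IsFinPartialIso μ p) :
    IsFinPartialIso μ (p.map (Equiv.prodComm V V).toEmbedding) := by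
  intro a ha b hb
  rw [Finset.mem_map_equiv] at ha hb
  obtain ⟨hfst, hμ⟩ := hp _ ha _ hb
  exact ⟨hfst.symm, hμ.symm⟩

lemma of_equiv [DecidableEq V] {A B : Finset V} (φ : {x // x ∈ A} ≃ {x // x ∈ B})
    (hφ : ∀ a b, μ (φ a : V) (φ b : V) = μ (a : V) (b : V)) :
    IsFinPartialIso μ (A.attach.image fun a => (a.1, (φ a).1)) := by
  simp only [IsFinPartialIso, Finset.mem_image, Finset.mem_attach, true_and]
  rintro _ ⟨a, rfl⟩ _ ⟨b, rfl⟩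
  refine ⟨?_, hφ a b⟩
  rw [← Subtype.ext_iff, ← Subtype.ext_iff, φ.apply_eq_iff_eq]

lemma injOn_snd {p : Finset (V × V)} (hp : IsFinPartialIso μ p) :
    Set.InjOn Prod.snd (p : Set (V × V)) :=
  fun a ha b hb h => Prod.ext ((hp a ha b hb).1.mpr h) h

lemma insert [DecidableEq V] {p : Finset (V × V)} (hp : IsFinPartialIso μ p)
    (hsymm : ∀ x y, μ x y = μ y x) {w v : V} (hself : μ v v = μ w w)
    (hnew : ∀ b ∈ p, (w = b.1 ↔ v = b.2) ∧ μ b.2 v = μ b.1 w) :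
    IsFinPartialIso μ (insert (w, v) p) := by
  intro a ha b hb
  rcases Finset.mem_insert.mp ha with rfl | ha <;> rcases Finset.mem_insert.mp hb with rfl | hb
  · exact ⟨iff_of_true rfl rfl, hself⟩
  · obtain ⟨hfst, hμ⟩ := hnew b hb
    exact ⟨hfst, by rw [hsymm, hμ, hsymm]⟩
  · obtain ⟨hfst, hμ⟩ := hnew a ha
    exact ⟨eq_comm.trans (hfst.trans eq_comm), hμ⟩
  · exact hp a ha b hb

end IsFinPartialIso

namespace FinPartialIso

lemma ideal_pairs_compatible (I : Order.Ideal (FinPartialIso μ)) {x x' y y' : V}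
    (h : ∃ p ∈ I, (x, y) ∈ p.1) (h' : ∃ p ∈ I, (x', y') ∈ p.1) :
    (x = x' ↔ y = y') ∧ μ y y' = μ x x' := by
  obtain ⟨p, hpI, hp⟩ := h
  obtain ⟨p', hpI', hp'⟩ := h'
  obtain ⟨q, -, hpq, hpq'⟩ := I.directed p hpI p' hpI'
  exact q.2 _ (hpq hp) _ (hpq' hp')

def definedAtLeft (hforth : HasForthProperty μ) (x : V) : Order.Cofinal (FinPartialIso μ) where
  carrier := {q | ∃ y, (x, y) ∈ q.1}
  isCofinal p := by
    obtain ⟨q, hpq, hq⟩ := hforth p x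
    exact ⟨q, hq, hpq⟩

def definedAtRight (hforth : HasForthProperty μ) (y : V) : Order.Cofinal (FinPartialIso μ) where
  carrier := {q | ∃ x, (x, y) ∈ q.1}
  isCofinal p := by
    let swap := (Equiv.prodComm V V).toEmbedding
    obtain ⟨q, hpq, x, hx⟩ := hforth ⟨p.1.map swap, p.2.map_prodComm⟩ y
    refine ⟨⟨q.1.map swap, q.2.map_prodComm⟩, ⟨x, Finset.mem_map_equiv.mpr hx⟩, fun a ha => ?_⟩
    exact Finset.mem_map_equiv.mpr (hpq (Finset.mem_map_equiv.mpr (by simpa using ha)))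

end FinPartialIso

open FinPartialIso in
theorem exists_equiv_of_forth [Countable V] (hforth : HasForthProperty μ)
    (p : FinPartialIso μ) :
    ∃ e : V ≃ V, (∀ x y, μ (e x) (e y) = μ x y) ∧ ∀ xy ∈ p.1, e xy.1 = xy.2 := by
  have : Encodable V := Encodable.ofCountable V
  let D : V ⊕ V → Order.Cofinal (FinPartialIso μ) :=
    Sum.elim (definedAtLeft hforth) (definedAtRight hforth)
  let I := Order.idealOfCofinals p D
  have hdom (x : V) : ∃ y, ∃ q ∈ I, (x, y) ∈ q.1 := by
    obtain ⟨q, ⟨y, hy⟩, hqI⟩ := Order.cofinal_meets_idealOfCofinals p D (Sum.inl x)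
    exact ⟨y, q, hqI, hy⟩
  have hcod (y : V) : ∃ x, ∃ q ∈ I, (x, y) ∈ q.1 := by
    obtain ⟨q, ⟨x, hx⟩, hqI⟩ := Order.cofinal_meets_idealOfCofinals p D (Sum.inr y)
    exact ⟨x, q, hqI, hx⟩
  choose f hf using hdom
  choose g hg using hcod
  refine ⟨⟨f, g, fun x => ?_, fun y => ?_⟩,
    fun x y => (ideal_pairs_compatible I (hf x) (hf y)).2, ?_⟩
  · exact (ideal_pairs_compatible I (hg (f x)) (hf x)).1.mpr rfl
  · exact (ideal_pairs_compatible I (hf (g y)) (hg y)).1.mp rfl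
  · intro xy hxy
    exact (ideal_pairs_compatible I (hf xy.1) ⟨p, Order.mem_idealOfCofinals p D, hxy⟩).1.mp rfl

lemma HasExtensionProperty.exists_of_injOn (hext : HasExtensionProperty μ) {ι : Type*}
    (s : Finset ι) {u : ι → V} (hu : Set.InjOn u s) (m : ι → α) :
    ∃ v, ∀ i ∈ s, v ≠ u i ∧ μ (u i) v = m i := by
  let e := s.equivFin
  obtain ⟨v, hne, hμ⟩ := hext s.card (fun k => u (e.symm k))
    (fun k l h => e.symm.injective (Subtype.ext (hu (e.symm k).2 (e.symm l).2 h)))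
    (fun k => m (e.symm k))
  refine ⟨v, fun i hi => ?_⟩
  have hi' : e.symm (e ⟨i, hi⟩) = ⟨i, hi⟩ := e.symm_apply_apply _
  exact ⟨by simpa only [hi'] using hne (e ⟨i, hi⟩), by simpa only [hi'] using hμ (e ⟨i, hi⟩)⟩

end PartialIso

theorem HasExtensionProperty.hasForthProperty {V : Type*} {μ : V → V → ℕ}
    (hsymm : ∀ x y, μ x y = μ y x) (hirr : ∀ x, μ x x = 0) (hext : HasExtensionProperty μ) :
    HasForthProperty μ := by
  classical
  rintro ⟨p, hp⟩ w
  by_cases hw : ∃ v, (w, v) ∈ p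
  · exact ⟨⟨p, hp⟩, le_rfl, hw⟩
  simp only [not_exists] at hw
  obtain ⟨v, hv⟩ := hext.exists_of_injOn p hp.injOn_snd fun b => μ b.1 w
  have hnew (b : V × V) (hb : b ∈ p) : (w = b.1 ↔ v = b.2) ∧ μ b.2 v = μ b.1 w :=
    ⟨iff_of_false (fun h => hw b.2 (by rw [h]; exact hb)) (hv b hb).1, (hv b hb).2⟩
  exact ⟨⟨_, hp.insert hsymm (by rw [hirr, hirr]) hnew⟩, Finset.subset_insert _ _,
    v, Finset.mem_insert_self _ _⟩

theorem rado_multigraph_ultrahomogeneous_general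
    (V : Type) [Countable V]
    (μ : V → V → ℕ) (hsymm : ∀ x y, μ x y = μ y x) (hirr : ∀ x, μ x x = 0)
    (hext : ∀ (n : ℕ) (u : Fin n → V), Function.Injective u →
      ∀ m : Fin n → ℕ, ∃ v : V, (∀ i, v ≠ u i) ∧ ∀ i, μ (u i) v = m i)
    (A B : Finset V) (φ : {x // x ∈ A} ≃ {x // x ∈ B})
    (hφ : ∀ x y : {x // x ∈ A}, μ ((φ x) : V) ((φ y) : V) = μ (x : V) (y : V)) :
    ∃ α : V ≃ V, (∀ x y, μ (α x) (α y) = μ x y) ∧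
      ∀ a : {x // x ∈ A}, α (a : V) = ((φ a) : V) := by
  classical
  obtain ⟨e, he_iso, he_ext⟩ := exists_equiv_of_forth
    (HasExtensionProperty.hasForthProperty hsymm hirr hext) ⟨_, .of_equiv φ hφ⟩
  exact ⟨e, he_iso, fun a => he_ext (a, φ a) (Finset.mem_image_of_mem _ (Finset.mem_attach _ a))⟩

/-- Ultrahomogeneity of the Rado multigraph: any isomorphism `φ` between finite
induced sub-multigraphs `A`, `B` of a countable model of the Rado multigraph
axioms extends to an automorphism of the whole structure. -/
theorem rado_multigraph_ultrahomogeneous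
    (V : Type) [Countable V] [Infinite V]
    (μ : V → V → ℕ) (hsymm : ∀ x y, μ x y = μ y x) (hirr : ∀ x, μ x x = 0)
    (hext : ∀ (n : ℕ) (u : Fin n → V), Function.Injective u →
      ∀ m : Fin n → ℕ, ∃ v : V, (∀ i, v ≠ u i) ∧ ∀ i, μ (u i) v = m i)
    (A B : Finset V) (φ : {x // x ∈ A} ≃ {x // x ∈ B})
    (hφ : ∀ x y : {x // x ∈ A}, μ ((φ x) : V) ((φ y) : V) = μ (x : V) (y : V)) :
    ∃ α : V ≃ V, (∀ x y, μ (α x) (α y) = μ x y) ∧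
      ∀ a : {x // x ∈ A}, α (a : V) = ((φ a) : V) :=
  rado_multigraph_ultrahomogeneous_general V μ hsymm hirr hext A B φ hφ
end

section
/- Let f : ℕ → ℕ with partial sums F(t) = ∑_{i=0}^{t-1} f(i), extended to ℝ≥0 as step functions. Suppose ∑_{s=0}^{∞} (f(s)/F(s))² < ∞. Then for every real β ≥ 1 there exists K_β > 0 such that for all integers t ≥ m ≥ 0, |∫_m^t f(s)/F(s)^β ds − ∑_{s=m}^{t} f(s)/F(s)^β| < K_β. -/
/-!
On `[n, n + 1]` the step function `f` is the constant `f n` and its antiderivative `F` is affine,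
rising from `F n` to `F (n + 1) = F n + f n`. Hence `∫_n^{n+1} f / F^β` lies between
`f n / F (n + 1)^β` and `f n / F n^β`, so the defect `f n / F n^β - ∫_n^{n+1} f / F^β` is
nonnegative and, by Bernoulli's inequality, at most `β (f n / F n)²`. Summing over `[m, t)`
bounds the total defect by `β ∑ (f s / F s)²`; the extra summand `f t / F t^β ≤ f t / F t` is
controlled by the same series.
-/

open Finset intervalIntegral MeasureTheory

open scoped Interval

theorem div_rpow_sub_div_add_rpow_le {c A β : ℝ} (hc : 0 ≤ c) (hA : 1 ≤ A) (hβ : 1 ≤ β) :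
    c / A ^ β - c / (A + c) ^ β ≤ β * (c / A) ^ 2 := by
  set B := A + c
  have hA0 : 0 < A := by linarith
  have hB0 : 0 < B := by linarith
  have hbernoulli : 1 - β * (c / B) ≤ A ^ β / B ^ β := by
    have h := one_add_mul_self_le_rpow_one_add (s := -(c / B))
      (by rw [neg_le_neg_iff, div_le_one hB0]; linarith) hβ
    rwa [show 1 + -(c / B) = A / B by field_simp; ring, Real.div_rpow hA0.le hB0.le,
      mul_neg, ← sub_eq_add_neg] at h
  have hAβ : A ≤ A ^ β := Real.self_le_rpow_of_one_le hA hβ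
  have hAB : A ≤ B := by linarith
  calc c / A ^ β - c / B ^ β = c / A ^ β * (1 - A ^ β / B ^ β) := by field_simp
    _ ≤ c / A ^ β * (β * (c / B)) := by gcongr; linarith
    _ ≤ c / A * (β * (c / A)) := by gcongr
    _ = β * (c / A) ^ 2 := by ring

theorem intervalIntegrable_div_add_mul_rpow {c A : ℝ} (hc : 0 ≤ c) (hA : 0 < A) (β : ℝ) :
    IntervalIntegrable (fun s => c / (A + c * s) ^ β) volume 0 1 := by
  have hpos : ∀ s ∈ [[(0 : ℝ), 1]], 0 < A + c * s := fun s hs => by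
    rw [Set.uIcc_of_le zero_le_one] at hs
    nlinarith [hs.1]
  refine ContinuousOn.intervalIntegrable ?_
  exact continuousOn_const.div
    ((continuousOn_const.add (continuousOn_const.mul continuousOn_id)).rpow_const
      fun s hs => Or.inl (hpos s hs).ne')
    fun s hs => (Real.rpow_pos_of_pos (hpos s hs) β).ne'

theorem div_add_rpow_le_integral_div_add_mul_rpow {c A β : ℝ} (hc : 0 ≤ c) (hA : 0 < A)
    (hβ : 0 ≤ β) : c / (A + c) ^ β ≤ ∫ s in 0..1, c / (A + c * s) ^ β := by
  simpa using integral_mono_on zero_le_one intervalIntegrable_const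
    (intervalIntegrable_div_add_mul_rpow hc hA β) fun s hs => by
      have : 0 < A + c * s := by nlinarith [hs.1]
      gcongr
      nlinarith [hs.2]

theorem integral_div_add_mul_rpow_le_div_rpow {c A β : ℝ} (hc : 0 ≤ c) (hA : 0 < A)
    (hβ : 0 ≤ β) : ∫ s in 0..1, c / (A + c * s) ^ β ≤ c / A ^ β := by
  simpa using integral_mono_on zero_le_one (intervalIntegrable_div_add_mul_rpow hc hA β)
    intervalIntegrable_const fun s hs => by
      gcongr
      nlinarith [hs.1]

theorem div_rpow_sub_integral_div_add_mul_rpow_mem_Icc {c A β : ℝ} (hc : 0 ≤ c) (hA : 1 ≤ A)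
    (hβ : 1 ≤ β) :
    c / A ^ β - ∫ s in 0..1, c / (A + c * s) ^ β ∈ Set.Icc 0 (β * (c / A) ^ 2) := by
  have hA0 : 0 < A := by linarith
  constructor
  · linarith [integral_div_add_mul_rpow_le_div_rpow hc hA0 (β := β) (by linarith)]
  · linarith [div_add_rpow_le_integral_div_add_mul_rpow hc hA0 (β := β) (by linarith),
      div_rpow_sub_div_add_rpow_le hc hA hβ]

section FloorStep

variable {a : ℕ → ℝ} {g G : ℝ → ℝ}

theorem ae_eq_of_floor_step (hg : ∀ s, 0 ≤ s → g s = a ⌊s⌋₊) {n : ℕ} {x : ℝ} (hnx : n ≤ x)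
    (hx : x ≤ n + 1) : ∀ᵐ s, s ∈ Ι (n : ℝ) x → g s = a n := by
  filter_upwards [compl_mem_ae_iff.2 (measure_singleton ((n : ℝ) + 1))] with s hs hmem
  rw [Set.uIoc_of_le hnx] at hmem
  have hs0 : 0 ≤ s := (Nat.cast_nonneg n).trans hmem.1.le
  rw [hg s hs0, Nat.floor_eq_on_Ico n s ⟨hmem.1.le, lt_of_le_of_ne (hmem.2.trans hx) hs⟩]

theorem intervalIntegrable_of_floor_step (hg : ∀ s, 0 ≤ s → g s = a ⌊s⌋₊) {n : ℕ} {x : ℝ}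
    (hnx : n ≤ x) (hx : x ≤ n + 1) : IntervalIntegrable g volume n x :=
  intervalIntegrable_const.congr_ae <| (ae_restrict_iff' measurableSet_uIoc).2 <|
    (ae_eq_of_floor_step hg hnx hx).mono fun _ h hs => (h hs).symm

theorem integral_of_floor_step (hg : ∀ s, 0 ≤ s → g s = a ⌊s⌋₊) {n : ℕ} {x : ℝ}
    (hnx : n ≤ x) (hx : x ≤ n + 1) : ∫ s in n..x, g s = a n * (x - n) := by
  rw [integral_congr_ae (ae_eq_of_floor_step hg hnx hx), intervalIntegral.integral_const,
    smul_eq_mul, mul_comm]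

theorem integral_zero_of_floor_step (hg : ∀ s, 0 ≤ s → g s = a ⌊s⌋₊) {n : ℕ} {x : ℝ}
    (hnx : n ≤ x) (hx : x ≤ n + 1) :
    ∫ s in 0..x, g s = ∑ i ∈ range n, a i + a n * (x - n) := by
  have hunit (k : ℕ) : IntervalIntegrable g volume k ((k + 1 : ℕ) : ℝ) := by
    simpa using intervalIntegrable_of_floor_step hg (n := k) (lt_add_one _).le le_rfl
  have hzero : IntervalIntegrable g volume 0 n := by
    simpa using IntervalIntegrable.trans_iterate (a := fun k : ℕ => (k : ℝ)) fun k _ => hunit k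
  rw [← integral_add_adjacent_intervals hzero (intervalIntegrable_of_floor_step hg hnx hx),
    ← Nat.cast_zero, ← sum_integral_adjacent_intervals (fun k _ => hunit k),
    integral_of_floor_step hg hnx hx]
  congr 1
  refine sum_congr rfl fun k _ => ?_
  rw [Nat.cast_succ, integral_of_floor_step hg (lt_add_one _).le le_rfl]
  ring

theorem ae_div_rpow_eq_of_floor_step (hg : ∀ s, 0 ≤ s → g s = a ⌊s⌋₊)
    (hG : ∀ x, 0 ≤ x → G x = ∫ s in 0..x, g s) (n : ℕ) (β : ℝ) :
    ∀ᵐ s, s ∈ Ι (n : ℝ) (n + 1) →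
      g s / G s ^ β = a n / (∑ i ∈ range n, a i + a n * (s - n)) ^ β := by
  filter_upwards [ae_eq_of_floor_step hg (lt_add_one _).le le_rfl] with s hs hmem
  obtain ⟨hns, hsn⟩ : (n : ℝ) < s ∧ s ≤ n + 1 := by
    rwa [Set.uIoc_of_le (lt_add_one _).le] at hmem
  rw [hs hmem, hG s ((Nat.cast_nonneg n).trans hns.le),
    integral_zero_of_floor_step hg hns.le hsn]

theorem integral_div_rpow_of_floor_step (hg : ∀ s, 0 ≤ s → g s = a ⌊s⌋₊)
    (hG : ∀ x, 0 ≤ x → G x = ∫ s in 0..x, g s) (n : ℕ) (β : ℝ) :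
    ∫ s in (n : ℝ)..n + 1, g s / G s ^ β =
      ∫ u in 0..1, a n / (∑ i ∈ range n, a i + a n * u) ^ β := by
  rw [integral_congr_ae (ae_div_rpow_eq_of_floor_step hg hG n β),
    integral_comp_sub_right (fun u => a n / (∑ i ∈ range n, a i + a n * u) ^ β)]
  simp

theorem intervalIntegrable_div_rpow_of_floor_step (hg : ∀ s, 0 ≤ s → g s = a ⌊s⌋₊)
    (hG : ∀ x, 0 ≤ x → G x = ∫ s in 0..x, g s) {n : ℕ} (ha : 0 ≤ a n)
    (hS : 0 < ∑ i ∈ range n, a i) (β : ℝ) :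
    IntervalIntegrable (fun s => g s / G s ^ β) volume n (n + 1) := by
  have h := (intervalIntegrable_div_add_mul_rpow ha hS β).comp_sub_right n
  rw [zero_add, add_comm] at h
  exact h.congr_ae <| (ae_restrict_iff' measurableSet_uIoc).2 <|
    (ae_div_rpow_eq_of_floor_step hg hG n β).mono fun _ h hs => (h hs).symm

theorem div_rpow_sub_integral_div_rpow_of_floor_step_mem_Icc
    (hg : ∀ s, 0 ≤ s → g s = a ⌊s⌋₊) (hG : ∀ x, 0 ≤ x → G x = ∫ s in 0..x, g s) {n : ℕ}
    (ha : 0 ≤ a n) (hS : 1 ≤ ∑ i ∈ range n, a i) {β : ℝ} (hβ : 1 ≤ β) :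
    a n / (∑ i ∈ range n, a i) ^ β - ∫ s in (n : ℝ)..n + 1, g s / G s ^ β ∈
      Set.Icc 0 (β * (a n / ∑ i ∈ range n, a i) ^ 2) := by
  rw [integral_div_rpow_of_floor_step hg hG n β]
  exact div_rpow_sub_integral_div_add_mul_rpow_mem_Icc ha hS hβ

end FloorStep

theorem abs_sum_Ico_sub_sum_Icc_lt {u I x : ℕ → ℝ} {β : ℝ} (hβ : 0 ≤ β)
    (hx : Summable fun n => x n ^ 2) {m t : ℕ} (hmt : m ≤ t)
    (hdefect : ∀ n ∈ Ico m t, u n - I n ∈ Set.Icc 0 (β * x n ^ 2)) (hut : 0 ≤ u t)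
    (hux : u t ≤ x t) :
    |∑ n ∈ Ico m t, I n - ∑ n ∈ Icc m t, u n| < β * ∑' n, x n ^ 2 + ∑' n, x n ^ 2 + 1 := by
  have hsplit :
      ∑ n ∈ Icc m t, u n - ∑ n ∈ Ico m t, I n = ∑ n ∈ Ico m t, (u n - I n) + u t := by
    rw [← Ico_add_one_right_eq_Icc, sum_Ico_succ_top hmt, sum_sub_distrib]
    ring
  have hsum_nonneg : 0 ≤ ∑ n ∈ Ico m t, (u n - I n) := sum_nonneg fun n hn => (hdefect n hn).1
  have hsum_le : ∑ n ∈ Ico m t, (u n - I n) ≤ β * ∑' n, x n ^ 2 :=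
    calc ∑ n ∈ Ico m t, (u n - I n) ≤ ∑ n ∈ Ico m t, β * x n ^ 2 :=
          sum_le_sum fun n hn => (hdefect n hn).2
      _ = β * ∑ n ∈ Ico m t, x n ^ 2 := (mul_sum _ _ _).symm
      _ ≤ β * ∑' n, x n ^ 2 := by gcongr; exact hx.sum_le_tsum _ fun _ _ => sq_nonneg _
  have hlast : u t < ∑' n, x n ^ 2 + 1 := by
    nlinarith [hx.le_tsum t fun _ _ => sq_nonneg _, sq_nonneg (x t - 1)]
  rw [abs_sub_comm, hsplit, abs_of_nonneg (by positivity)]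
  linarith

/-- Integral–sum comparison (Lemma `lem:integral`): if `∑ (f(s)/F(s))² < ∞`,
where `F(t) = ∑_{i<t} f(i)` (extended to real arguments as a step function, with
`F` its antiderivative), then for every `β ≥ 1` there is `K_β > 0` bounding the
difference between `∫_m^t f(s)/F(s)^β ds` and `∑_{s=m}^t f(s)/F(s)^β`,
uniformly over all `t ≥ m` in the range where `F` is positive. -/
theorem integral_sum_comparison
    (f : ℕ → ℕ) (hf0 : 1 ≤ f 0)
    (F : ℕ → ℕ) (hF : ∀ t, F t = ∑ i ∈ Finset.range t, f i)
    (fR : ℝ → ℝ) (hfR : ∀ s : ℝ, 0 ≤ s → fR s = f ⌊s⌋₊)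
    (FR : ℝ → ℝ) (hFR : ∀ t : ℝ, 0 ≤ t → FR t = ∫ s in (0:ℝ)..t, fR s)
    (hsum : Summable (fun s => ((f s : ℝ) / (F s : ℝ)) ^ 2)) :
    ∀ β : ℝ, 1 ≤ β → ∃ K : ℝ, 0 < K ∧ ∀ m t : ℕ, 1 ≤ m → m ≤ t →
      |(∫ s in (m : ℝ)..(t : ℝ), fR s / (FR s) ^ β)
        - ∑ s ∈ Finset.Icc m t, (f s : ℝ) / (F s : ℝ) ^ β| < K := by
  intro β hβ
  have hF_cast (n : ℕ) : (F n : ℝ) = ∑ i ∈ range n, (f i : ℝ) := by rw [hF]; push_cast; rfl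
  have hF_one (n : ℕ) (hn : 1 ≤ n) : (1 : ℝ) ≤ ∑ i ∈ range n, (f i : ℝ) := by
    rw [← hF_cast, hF]
    exact_mod_cast hf0.trans (single_le_sum (fun i _ => Nat.zero_le (f i)) (mem_range.2 hn))
  set C := ∑' n, ((f n : ℝ) / F n) ^ 2
  refine ⟨β * C + C + 1, by positivity, fun m t hm hmt => ?_⟩
  rw [← sum_integral_adjacent_intervals_Ico (a := fun k : ℕ => (k : ℝ)) hmt fun k hk => by
    exact_mod_cast intervalIntegrable_div_rpow_of_floor_step (a := fun i => (f i : ℝ)) hfR hFR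
      (Nat.cast_nonneg _) (zero_lt_one.trans_le (hF_one k (hm.trans hk.1))) β]
  refine abs_sum_Ico_sub_sum_Icc_lt (by linarith) hsum hmt (fun n hn => ?_) (by positivity) ?_
  · simp_rw [hF_cast, Nat.cast_succ]
    exact div_rpow_sub_integral_div_rpow_of_floor_step_mem_Icc (a := fun i => (f i : ℝ)) hfR hFR
      (Nat.cast_nonneg _) (hF_one n (hm.trans (mem_Ico.1 hn).1)) hβ
  · have hFt : (1 : ℝ) ≤ F t := (hF_one t (hm.trans hmt)).trans_eq (hF_cast t).symm
    gcongr
    exact Real.self_le_rpow_of_one_le hFt hβ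
end

section
/- Suppose ∑_s (f(s)/F(s))² < ∞ where F(t) = ∑_{i<t} f(i) > 0. Then A(t) := ∏_{j=1}^{t-1} (1 + f(j)/(2F(j))) satisfies A(t) = Θ(F(t)^{1/2}): there are constants 0 < c ≤ C such that c·F(t)^{1/2} ≤ A(t) ≤ C·F(t)^{1/2} for all large t. -/
/-!
With `x j = f j / F j` we have `1 + x j = F (j+1) / F j`, so `∏ (1 + x j)` telescopes to
`F t / F 1`. The exact identity `(1 + x/2)² = (1 + x) (1 + x² / (4(1+ x)))` then gives
`A(t)² = F t / F 1 · P t`, where the correction product `P t = ∏ (1 + x j² / (4(1 + x j)))`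
lies between `1` and `exp (∑' x²/4)`, finite because `∑ x² < ∞`.
-/

open Finset Real

theorem one_add_half_sq_eq {K : Type*} [Field K] [CharZero K] {x : K} (hx : 1 + x ≠ 0) :
    (1 + x / 2) ^ 2 = (1 + x) * (1 + x ^ 2 / (4 * (1 + x))) := by
  field_simp
  ring

theorem prod_Ico_one_add_div_eq_div {K : Type*} [Field K] {a F : ℕ → K}
    (hF : ∀ j, F (j + 1) = F j + a j) {m : ℕ} (hne : ∀ j, m ≤ j → F j ≠ 0) {t : ℕ}
    (hmt : m ≤ t) : ∏ j ∈ Ico m t, (1 + a j / F j) = F t / F m := by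
  induction t, hmt using Nat.le_induction with
  | base => simp [div_self (hne m le_rfl)]
  | succ n hmn ih =>
    rw [prod_Ico_succ_top hmn, ih, hF n]
    field_simp [hne n hmn, hne m le_rfl]

theorem prod_one_add_sq_div_le_exp_tsum {ι : Type*} {x : ι → ℝ} (hx : ∀ j, 0 ≤ x j)
    (hsum : Summable fun j => x j ^ 2) (s : Finset ι) :
    ∏ j ∈ s, (1 + x j ^ 2 / (4 * (1 + x j))) ≤ exp ((∑' j, x j ^ 2) / 4) := by
  have hterm : ∀ j, x j ^ 2 / (4 * (1 + x j)) ≤ x j ^ 2 / 4 := fun j =>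
    div_le_div_of_nonneg_left (sq_nonneg _) (by norm_num) (by linarith [hx j])
  calc ∏ j ∈ s, (1 + x j ^ 2 / (4 * (1 + x j)))
      ≤ exp (∑ j ∈ s, x j ^ 2 / (4 * (1 + x j))) :=
        prod_one_add_le_exp_sum s fun j => by have := hx j; positivity
    _ ≤ exp ((∑ j ∈ s, x j ^ 2) / 4) := by
        rw [sum_div]
        exact exp_le_exp.mpr (sum_le_sum fun j _ => hterm j)
    _ ≤ exp ((∑' j, x j ^ 2) / 4) := by
        gcongr
        exact hsum.sum_le_tsum s fun j _ => sq_nonneg _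

theorem sq_prod_Ico_one_add_div_two_mul_eq {a F : ℕ → ℝ} (ha : ∀ j, 0 ≤ a j)
    (hF : ∀ j, F (j + 1) = F j + a j) (hpos : ∀ j, 1 ≤ j → 0 < F j) {t : ℕ} (ht : 1 ≤ t) :
    (∏ j ∈ Ico 1 t, (1 + a j / (2 * F j))) ^ 2 =
      F t / F 1 * ∏ j ∈ Ico 1 t, (1 + (a j / F j) ^ 2 / (4 * (1 + a j / F j))) := by
  rw [← prod_Ico_one_add_div_eq_div hF (fun j hj => (hpos j hj).ne') ht, ← prod_pow,
    ← prod_mul_distrib]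
  refine prod_congr rfl fun j hj => ?_
  have hx : 0 ≤ a j / F j := div_nonneg (ha j) (hpos j (mem_Ico.mp hj).1).le
  rw [← one_add_half_sq_eq (by linarith)]
  ring

/-- Growth of the normalising constants (Proposition `prop:xuexists` (ii)):
if `∑ (f(s)/F(s))² < ∞` with `F(t) = ∑_{i<t} f(i) > 0` for `t ≥ 1`, then
`A(t) = ∏_{j=1}^{t-1}(1 + f(j)/(2F(j)))` satisfies `A(t) = Θ(F(t)^{1/2})`. -/
theorem mpa_normaliser_growth
    (f : ℕ → ℕ) (F : ℕ → ℕ) (hF : ∀ t, F t = ∑ i ∈ Finset.range t, f i)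
    (hFpos : ∀ t, 1 ≤ t → 0 < F t)
    (hsum : Summable fun s => ((f s : ℝ) / (F s : ℝ)) ^ 2) :
    ∃ c C : ℝ, 0 < c ∧ c ≤ C ∧ ∃ N : ℕ, ∀ t, N ≤ t →
      c * Real.sqrt (F t) ≤ ∏ j ∈ Finset.Ico 1 t, (1 + (f j : ℝ) / (2 * F j)) ∧
      (∏ j ∈ Finset.Ico 1 t, (1 + (f j : ℝ) / (2 * F j))) ≤ C * Real.sqrt (F t) := by
  set x : ℕ → ℝ := fun j => (f j : ℝ) / F j
  have hx : ∀ j, 0 ≤ x j := fun j => by positivity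
  set S := ∑' j, x j ^ 2
  set P : ℕ → ℝ := fun t => ∏ j ∈ Ico 1 t, (1 + x j ^ 2 / (4 * (1 + x j)))
  have hP_ge : ∀ t, 1 ≤ P t := fun t =>
    one_le_prod fun j _ => le_add_of_nonneg_right (by have := hx j; positivity)
  have hP_le : ∀ t, P t ≤ exp (S / 4) := fun t => prod_one_add_sq_div_le_exp_tsum hx hsum _
  have hF1 : (0 : ℝ) < F 1 := by exact_mod_cast hFpos 1 le_rfl
  have hA_sq : ∀ t, 1 ≤ t →
      (∏ j ∈ Ico 1 t, (1 + (f j : ℝ) / (2 * F j))) ^ 2 = F t / F 1 * P t := fun t ht =>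
    sq_prod_Ico_one_add_div_two_mul_eq (fun j => Nat.cast_nonneg _)
      (fun j => by simp only [hF, sum_range_succ, Nat.cast_add])
      (fun j hj => Nat.cast_pos.mpr (hFpos j hj)) ht
  refine ⟨√(1 / F 1), √(exp (S / 4) / F 1), by positivity,
    sqrt_le_sqrt (by gcongr; exact (hP_ge 0).trans (hP_le 0)), 1, fun t ht => ?_⟩
  have hA_nonneg : 0 ≤ ∏ j ∈ Ico 1 t, (1 + (f j : ℝ) / (2 * F j)) := by positivity
  rw [← sqrt_mul (by positivity), ← sqrt_mul (by positivity), ← sqrt_sq hA_nonneg, hA_sq t ht]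
  constructor <;> apply sqrt_le_sqrt
  · calc 1 / (F 1 : ℝ) * F t = F t / F 1 * 1 := by ring
      _ ≤ F t / F 1 * P t := by gcongr; exact hP_ge t
  · calc F t / F 1 * P t ≤ F t / F 1 * exp (S / 4) := by gcongr; exact hP_le t
      _ = exp (S / 4) / F 1 * F t := by ring
end

section
/- Under the assumption ∑_s (f(s)/F(s))² < ∞, in MPA_f the martingale X(t) = d_u(t)/A(t) converges almost surely to a finite nonnegative random variable, and consequently there exists a random x_u ≥ 0 with d_u(t)/F(t)^{1/2} converging to a finite limit proportional to x_u. -/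
/-!
Since `d_u(t) ≥ 0`, the martingale `X(t) = d_u(t)/A(t)` has constant, hence bounded, `L¹` norm
`E X(t) = E X(0)`, so Doob's convergence theorem gives an almost sure nonnegative limit `x_u`.
Writing `x_j = f(j)/F(j)`, the recursion `F(j+1) = F(j)(1 + x_j)` telescopes, and the factorwise
bounds `1 + x ≤ (1 + x/2)² ≤ (1 + x) e^{x²/4}` squeeze `A(t)²` between `F(t)/F(1)` and
`F(t)/F(1) · exp(∑ x_j²/4)`; the last sum is finite by hypothesis, so `A(t) = Θ(F(t)^{1/2})`.
-/

open MeasureTheory Filter Topology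

namespace MeasureTheory.Martingale

variable {Ω : Type*} {m0 : MeasurableSpace Ω} {μ : Measure Ω} {ℱ : Filtration ℕ m0}
  {X : ℕ → Ω → ℝ}

lemma integral_eq_integral_zero [IsFiniteMeasure μ] (hX : Martingale X ℱ μ) (n : ℕ) :
    ∫ ω, X n ω ∂μ = ∫ ω, X 0 ω ∂μ := by
  rw [← integral_condExp (ℱ.le 0), integral_congr_ae (hX.condExp_ae_eq (Nat.zero_le n))]

lemma eLpNorm_one_eq_of_nonneg [IsFiniteMeasure μ] (hX : Martingale X ℱ μ)
    (hnn : ∀ n ω, 0 ≤ X n ω) (n : ℕ) :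
    eLpNorm (X n) 1 μ = eLpNorm (X 0) 1 μ := by
  have key : ∀ k, eLpNorm (X k) 1 μ = ENNReal.ofReal (∫ ω, X k ω ∂μ) := fun k => by
    rw [ofReal_integral_eq_lintegral_ofReal (hX.integrable k) (.of_forall (hnn k)),
      eLpNorm_one_eq_lintegral_enorm]
    exact lintegral_congr fun ω => Real.enorm_of_nonneg (hnn k ω)
  rw [key, key, hX.integral_eq_integral_zero]

lemma ae_tendsto_limitProcess_of_nonneg [IsFiniteMeasure μ] (hX : Martingale X ℱ μ)
    (hnn : ∀ n ω, 0 ≤ X n ω) :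
    ∀ᵐ ω ∂μ, 0 ≤ ℱ.limitProcess X μ ω ∧ Tendsto (X · ω) atTop (𝓝 (ℱ.limitProcess X μ ω)) := by
  have hfin : eLpNorm (X 0) 1 μ ≠ ⊤ :=
    (memLp_one_iff_integrable.mpr (hX.integrable 0)).eLpNorm_ne_top
  have hbdd : ∀ n, eLpNorm (X n) 1 μ ≤ (eLpNorm (X 0) 1 μ).toNNReal := fun n => by
    rw [ENNReal.coe_toNNReal hfin, hX.eLpNorm_one_eq_of_nonneg hnn]
  filter_upwards [hX.submartingale.ae_tendsto_limitProcess hbdd] with ω hω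
  exact ⟨ge_of_tendsto' hω fun n => hnn n ω, hω⟩

end MeasureTheory.Martingale

lemma one_add_le_sq_one_add_half {x : ℝ} (hx : 0 ≤ x) :
    1 + x ≤ (1 + x / 2) ^ 2 ∧ (1 + x / 2) ^ 2 ≤ (1 + x) * Real.exp (x ^ 2 / 4) := by
  have hexp : 1 + x ^ 2 / 4 ≤ Real.exp (x ^ 2 / 4) := by linarith [Real.add_one_le_exp (x ^ 2 / 4)]
  refine ⟨by nlinarith, ?_⟩
  calc (1 + x / 2) ^ 2 ≤ (1 + x) * (1 + x ^ 2 / 4) := by nlinarith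
    _ ≤ (1 + x) * Real.exp (x ^ 2 / 4) := by gcongr

lemma Finset.prod_one_add_le_sq_prod_one_add_half {ι : Type*} (s : Finset ι) {x : ι → ℝ}
    (hx : ∀ i ∈ s, 0 ≤ x i) :
    ∏ i ∈ s, (1 + x i) ≤ (∏ i ∈ s, (1 + x i / 2)) ^ 2 ∧
      (∏ i ∈ s, (1 + x i / 2)) ^ 2 ≤ (∏ i ∈ s, (1 + x i)) * Real.exp (∑ i ∈ s, x i ^ 2 / 4) := by
  rw [← Finset.prod_pow, Real.exp_sum, ← Finset.prod_mul_distrib]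
  constructor
  · exact Finset.prod_le_prod (fun i hi => by linarith [hx i hi])
      fun i hi => (one_add_le_sq_one_add_half (hx i hi)).1
  · exact Finset.prod_le_prod (fun i _ => by positivity)
      fun i hi => (one_add_le_sq_one_add_half (hx i hi)).2

section GrowingSum

variable {f F : ℕ → ℝ}

lemma prod_Ico_one_add_div_eq_div_s12 (hF : ∀ t, F (t + 1) = F t + f t)
    (hFpos : ∀ t, 1 ≤ t → 0 < F t) {t : ℕ} (ht : 1 ≤ t) :
    ∏ j ∈ Finset.Ico 1 t, (1 + f j / F j) = F t / F 1 := by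
  induction t, ht using Nat.le_induction with
  | base => simp [(hFpos 1 le_rfl).ne']
  | succ t ht ih =>
    have hFt := (hFpos t ht).ne'
    rw [Finset.prod_Ico_succ_top ht, ih, hF t]
    field_simp

lemma exists_mul_sqrt_le_prod_one_add_div_two_mul_le (hf : ∀ t, 0 ≤ f t)
    (hF : ∀ t, F (t + 1) = F t + f t) (hFpos : ∀ t, 1 ≤ t → 0 < F t)
    (hsum : Summable fun s => (f s / F s) ^ 2) :
    ∃ c C : ℝ, 0 < c ∧ c ≤ C ∧ ∀ t, 1 ≤ t →
      c * √(F t) ≤ ∏ j ∈ Finset.Ico 1 t, (1 + f j / (2 * F j)) ∧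
      ∏ j ∈ Finset.Ico 1 t, (1 + f j / (2 * F j)) ≤ C * √(F t) := by
  have hF1 := hFpos 1 le_rfl
  set R := ∑' s, (f s / F s) ^ 2 / 4
  have hR : 1 ≤ Real.exp R := Real.one_le_exp (tsum_nonneg fun s => by positivity)
  refine ⟨√(1 / F 1), √(Real.exp R / F 1), by positivity, by gcongr, fun t ht => ?_⟩
  have hFt := hFpos t ht
  have hratio : ∀ j, f j / (2 * F j) = f j / F j / 2 := fun j => by ring
  have hx : ∀ j ∈ Finset.Ico 1 t, 0 ≤ f j / F j := fun j hj =>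
    div_nonneg (hf j) (hFpos j (Finset.mem_Ico.1 hj).1).le
  obtain ⟨hlow, hupp⟩ := Finset.prod_one_add_le_sq_prod_one_add_half (Finset.Ico 1 t) hx
  rw [prod_Ico_one_add_div_eq_div_s12 hF hFpos ht] at hlow hupp
  have hpartial : ∑ j ∈ Finset.Ico 1 t, (f j / F j) ^ 2 / 4 ≤ R :=
    (hsum.div_const 4).sum_le_tsum _ fun j _ => by positivity
  have hprod : 0 ≤ ∏ j ∈ Finset.Ico 1 t, (1 + f j / F j / 2) :=
    Finset.prod_nonneg fun j hj => by linarith [hx j hj]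
  simp only [hratio]
  rw [← Real.sqrt_mul (by positivity), ← Real.sqrt_mul (by positivity)]
  refine ⟨(Real.sqrt_le_left hprod).2 (by rwa [one_div_mul_eq_div]),
    (Real.le_sqrt hprod (by positivity)).2 ?_⟩
  calc _ ≤ F t / F 1 * Real.exp (∑ j ∈ Finset.Ico 1 t, (f j / F j) ^ 2 / 4) := hupp
    _ ≤ F t / F 1 * Real.exp R := by gcongr
    _ = Real.exp R / F 1 * F t := by ring

end GrowingSum

lemma eventually_mul_le_and_le_mul_of_tendsto_div {α : Type*} {l : Filter α} {d a s : α → ℝ}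
    {x c C ε : ℝ} (hlim : Tendsto (fun t => d t / a t) l (𝓝 x)) (hε : 0 < ε) (hc : 0 ≤ c)
    (hd : ∀ t, 0 ≤ d t) (ha : ∀ t, 0 < a t) (hs : ∀ t, 0 ≤ s t)
    (hbounds : ∀ᶠ t in l, c * s t ≤ a t ∧ a t ≤ C * s t) :
    ∀ᶠ t in l, (x - ε) * c * s t ≤ d t ∧ d t ≤ (x + ε) * C * s t := by
  have hclose : ∀ᶠ t in l, |d t / a t - x| < ε := by
    simpa only [Real.dist_eq] using hlim.eventually (Metric.ball_mem_nhds x hε)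
  filter_upwards [hclose, hbounds] with t hdist ⟨hlow, hupp⟩
  obtain ⟨h₁, h₂⟩ := abs_sub_lt_iff.mp hdist
  have hda : d t = d t / a t * a t := (div_mul_cancel₀ _ (ha t).ne').symm
  have hratio : 0 ≤ d t / a t := div_nonneg (hd t) (ha t).le
  constructor
  · rcases le_or_gt (x - ε) 0 with hneg | hpos
    · have : (x - ε) * c * s t ≤ 0 :=
        mul_nonpos_of_nonpos_of_nonneg (mul_nonpos_of_nonpos_of_nonneg hneg hc) (hs t)
      linarith [hd t]
    · calc (x - ε) * c * s t ≤ (x - ε) * a t := by nlinarith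
        _ ≤ d t / a t * a t := by gcongr; exacts [(ha t).le, by linarith]
        _ = d t := hda.symm
  · calc d t = d t / a t * a t := hda
      _ ≤ (x + ε) * (C * s t) := by gcongr <;> linarith [ha t]
      _ = (x + ε) * C * s t := by ring

/-- Almost-sure convergence of the normalised degree (Proposition
`prop:xuexists` (iii)): under `∑ (f(s)/F(s))² < ∞`, the nonnegative martingale
`X(t) = d_u(t)/A(t)` converges almost surely to a finite nonnegative random
variable `x_u`, and consequently `d_u(t)` is of order `x_u · F(t)^{1/2}`. -/
theorem mpa_normalised_degree_converges
    (f : ℕ → ℕ) (F : ℕ → ℕ) (hF : ∀ t, F t = ∑ i ∈ Finset.range t, f i)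
    (hFpos : ∀ t, 1 ≤ t → 0 < F t)
    (hsum : Summable fun s => ((f s : ℝ) / (F s : ℝ)) ^ 2)
    (Ω : Type) [m0 : MeasurableSpace Ω] (P : Measure Ω) [IsProbabilityMeasure P]
    (𝒢 : Filtration ℕ m0)
    (d : ℕ → Ω → ℝ) (hd0 : ∀ t ω, 0 ≤ d t ω)
    (A : ℕ → ℝ)
    (hA : ∀ t, A t = ∏ j ∈ Finset.Ico 1 t, (1 + (f j : ℝ) / (2 * F j)))
    (hmart : Martingale (fun t ω => d t ω / A t) 𝒢 P) :
    ∃ x : Ω → ℝ,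
      (∀ᵐ ω ∂P, 0 ≤ x ω ∧ Tendsto (fun t => d t ω / A t) atTop (nhds (x ω))) ∧
      ∃ c C : ℝ, 0 < c ∧ c ≤ C ∧
        ∀ᵐ ω ∂P, ∀ ε : ℝ, 0 < ε → ∀ᶠ t in atTop,
          (x ω - ε) * c * Real.sqrt (F t) ≤ d t ω ∧
          d t ω ≤ (x ω + ε) * C * Real.sqrt (F t) := by
  have hApos : ∀ t, 0 < A t := fun t => by
    rw [hA t]
    exact Finset.prod_pos fun j _ => by positivity
  have hlim := hmart.ae_tendsto_limitProcess_of_nonneg fun t ω =>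
    div_nonneg (hd0 t ω) (hApos t).le
  have hFsucc : ∀ t, (F (t + 1) : ℝ) = F t + f t := fun t => by
    rw [hF, hF, Finset.sum_range_succ, Nat.cast_add]
  obtain ⟨c, C, hc, hcC, hbounds⟩ := exists_mul_sqrt_le_prod_one_add_div_two_mul_le
    (fun t => (f t).cast_nonneg) hFsucc (fun t ht => Nat.cast_pos.2 (hFpos t ht)) hsum
  refine ⟨𝒢.limitProcess _ P, hlim, c, C, hc, hcC, ?_⟩
  filter_upwards [hlim] with ω hω ε hε
  refine eventually_mul_le_and_le_mul_of_tendsto_div hω.2 hε hc.le (hd0 · ω) hApos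
    (fun t => Real.sqrt_nonneg _) ?_
  filter_upwards [eventually_ge_atTop 1] with t ht
  rw [hA t]
  exact hbounds t ht
end

section
/- Tail decay in MPA_f with linear edge growth: assume c_1 t ≤ f(t) ≤ c_2 t and c_1 t² ≤ 2F(t) ≤ c_2 t² for constants 0 < c_1 ≤ c_2, fix α ∈ (1/2, 1), and suppose a node u has degree d with b_1 t < d < b_2 t (0 < b_1 < b_2). Then the probability that u receives at least t^α new edges at stage t+1 is at most (B/t^α)^{t^α} for some constant B depending only on c_1, c_2, b_1, b_2, α, for all sufficiently large t. -/
/-!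
The number of new edges is binomial with mean `f(t) · d / (2F(t)) ≤ C := c₂ b₂ / c₁`, a
constant. Bounding `(n choose k) pᵏ ≤ (np)ᵏ / k! ≤ (C e / k)ᵏ` with `k! ≥ (k / e)ᵏ`, every term of
the tail from `S = ⌈t^α⌉` on is at most `rᵏ` with `r = C e / S ≤ 1/2` once `t` is large, so the
tail is at most `2 rˢ ≤ (2 C e / S)ˢ ≤ (2 C e / t^α)^{t^α}`.
-/

open Filter Finset Real
open scoped Nat

lemma pow_div_factorial_le_mul_exp_div_pow {x : ℝ} (hx : 0 ≤ x) (k : ℕ) :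
    x ^ k / k ! ≤ (x * exp 1 / k) ^ k := by
  rcases k.eq_zero_or_pos with rfl | hk
  · simp
  have hk' : (0 : ℝ) < k := by exact_mod_cast hk
  have hkk : (k : ℝ) ^ k ≤ exp 1 ^ k * k ! := by
    rw [← div_le_iff₀ (by positivity), ← exp_nat_mul, mul_one]
    exact pow_div_factorial_le_exp _ hk'.le k
  rw [div_pow, mul_pow, div_le_div_iff₀ (by positivity) (by positivity), mul_assoc]
  exact mul_le_mul_of_nonneg_left hkk (by positivity)

lemma choose_mul_pow_mul_pow_le {n k : ℕ} {p C : ℝ} (hp₀ : 0 ≤ p) (hp₁ : p ≤ 1)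
    (hnp : n * p ≤ C) :
    n.choose k * p ^ k * (1 - p) ^ (n - k) ≤ (C * exp 1 / k) ^ k := by
  calc n.choose k * p ^ k * (1 - p) ^ (n - k)
      ≤ n.choose k * p ^ k :=
        mul_le_of_le_one_right (by positivity) (pow_le_one₀ (by linarith) (by linarith))
    _ ≤ (n : ℝ) ^ k / k ! * p ^ k :=
        mul_le_mul_of_nonneg_right (Nat.choose_le_pow_div k n) (by positivity)
    _ = (n * p) ^ k / k ! := by rw [mul_pow]; ring
    _ ≤ C ^ k / k ! := by gcongr
    _ ≤ (C * exp 1 / k) ^ k :=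
        pow_div_factorial_le_mul_exp_div_pow ((by positivity : (0 : ℝ) ≤ n * p).trans hnp) k

lemma sum_Icc_choose_mul_pow_mul_pow_le {n S : ℕ} {p C : ℝ} (hp₀ : 0 ≤ p) (hp₁ : p ≤ 1)
    (hnp : n * p ≤ C) (hS : 0 < S) (hCS : 2 * C * exp 1 ≤ S) :
    ∑ k ∈ Icc S n, n.choose k * p ^ k * (1 - p) ^ (n - k) ≤ (2 * C * exp 1 / S) ^ S := by
  have hC : 0 ≤ C := (by positivity : (0 : ℝ) ≤ n * p).trans hnp
  have hS' : (0 : ℝ) < S := by exact_mod_cast hS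
  set r := C * exp 1 / S
  have hr₀ : 0 ≤ r := by positivity
  have hr : r ≤ 1 / 2 := by
    rw [div_le_iff₀ hS']
    linarith
  have hterm : ∀ k ∈ Icc S n, n.choose k * p ^ k * (1 - p) ^ (n - k) ≤ r ^ k := by
    intro k hk
    have hSk : (S : ℝ) ≤ k := by exact_mod_cast (mem_Icc.1 hk).1
    refine (choose_mul_pow_mul_pow_le hp₀ hp₁ hnp).trans (pow_le_pow_left₀ (by positivity) ?_ k)
    exact div_le_div_of_nonneg_left (by positivity) hS' hSk
  calc ∑ k ∈ Icc S n, n.choose k * p ^ k * (1 - p) ^ (n - k)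
      ≤ ∑ k ∈ Ico S (n + 1), r ^ k := by
        rw [Ico_add_one_right_eq_Icc]
        exact sum_le_sum hterm
    _ ≤ r ^ S / (1 - r) := geom_sum_Ico_le_of_lt_one hr₀ (by linarith)
    _ ≤ 2 * r ^ S := by
        rw [div_le_iff₀ (by linarith)]
        nlinarith [pow_nonneg hr₀ S]
    _ ≤ 2 ^ S * r ^ S := by gcongr; exact le_self_pow₀ one_le_two hS.ne'
    _ = (2 * C * exp 1 / S) ^ S := by rw [← mul_pow]; ring

lemma div_natCeil_pow_natCeil_le_rpow {B y : ℝ} (hB : 0 ≤ B) (hy : 0 < y) (hBy : B ≤ y) :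
    (B / ⌈y⌉₊) ^ ⌈y⌉₊ ≤ (B / y) ^ y := by
  have hceil : y ≤ ⌈y⌉₊ := Nat.le_ceil y
  calc (B / ⌈y⌉₊) ^ ⌈y⌉₊ ≤ (B / y) ^ ⌈y⌉₊ := by gcongr
    _ = (B / y) ^ (⌈y⌉₊ : ℝ) := (rpow_natCast _ _).symm
    _ ≤ (B / y) ^ y :=
        rpow_le_rpow_of_exponent_ge' (by positivity) ((div_le_one hy).2 hBy) hy.le hceil

lemma mul_div_le_of_le_mul_of_mul_sq_le {c₁ c₂ b t x y d : ℝ} (hc₁ : 0 < c₁) (hc₂ : 0 ≤ c₂)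
    (ht : 0 < t) (hx : x ≤ c₂ * t) (hy : c₁ * t ^ 2 ≤ y) (hd₀ : 0 ≤ d) (hd : d ≤ b * t) :
    x * (d / y) ≤ c₂ * b / c₁ := by
  have hy₀ : 0 < y := lt_of_lt_of_le (by positivity) hy
  calc x * (d / y) ≤ (c₂ * t) * (b * t / (c₁ * t ^ 2)) := by
        gcongr
        exact hd₀.trans hd
    _ = c₂ * b / c₁ := by field_simp

theorem mpa_tail_decay_general
    (f : ℕ → ℕ) (F : ℕ → ℕ)
    (c₁ c₂ : ℝ) (hc₁ : 0 < c₁) (hc : c₁ ≤ c₂)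
    (hf : ∀ t : ℕ, 1 ≤ t → c₁ * t ≤ (f t : ℝ) ∧ (f t : ℝ) ≤ c₂ * t)
    (hF2 : ∀ t : ℕ, 1 ≤ t → c₁ * t ^ 2 ≤ 2 * (F t : ℝ) ∧ 2 * (F t : ℝ) ≤ c₂ * t ^ 2)
    (α : ℝ) (hα : 1 / 2 < α)
    (b₁ b₂ : ℝ) (hb₁ : 0 < b₁) (hb : b₁ < b₂) :
    ∃ B : ℝ, 0 < B ∧ ∃ N : ℕ, ∀ t : ℕ, N ≤ t → ∀ d : ℝ,
      b₁ * t < d → d < b₂ * t →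
      ∑ k ∈ Finset.Icc ⌈(t : ℝ) ^ α⌉₊ (f t),
          ((f t).choose k : ℝ) * (d / (2 * F t)) ^ k
            * (1 - d / (2 * F t)) ^ (f t - k)
        ≤ (B / (t : ℝ) ^ α) ^ ((t : ℝ) ^ α) := by
  have hc₂ : 0 < c₂ := hc₁.trans_le hc
  have hb₂ : 0 < b₂ := hb₁.trans hb
  set B := 2 * (c₂ * b₂ / c₁) * exp 1
  have hB : 0 < B := by positivity
  have hlarge : ∀ᶠ t : ℕ in atTop, 1 ≤ t ∧ b₂ ≤ c₁ * t ∧ B ≤ (t : ℝ) ^ α :=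
    (eventually_ge_atTop 1).and <|
      ((tendsto_natCast_atTop_atTop.const_mul_atTop hc₁).eventually_ge_atTop b₂).and
      (((tendsto_rpow_atTop (by linarith)).comp tendsto_natCast_atTop_atTop).eventually_ge_atTop B)
  obtain ⟨N, hN⟩ := eventually_atTop.1 hlarge
  refine ⟨B, hB, N, fun t htN d hd₁ hd₂ => ?_⟩
  obtain ⟨ht, hb₂t, hBt⟩ := hN t htN
  obtain ⟨-, hft⟩ := hf t ht
  obtain ⟨hFt, -⟩ := hF2 t ht
  have ht₀ : (0 : ℝ) < t := by exact_mod_cast ht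
  have hd₀ : 0 ≤ d := by nlinarith
  have hp₁ : d / (2 * F t) ≤ 1 := by
    rw [div_le_one (lt_of_lt_of_le (by positivity) hFt)]
    nlinarith
  have hnp := mul_div_le_of_le_mul_of_mul_sq_le hc₁ hc₂.le ht₀ hft hFt hd₀ hd₂.le
  calc _ ≤ (B / ⌈(t : ℝ) ^ α⌉₊) ^ ⌈(t : ℝ) ^ α⌉₊ :=
        sum_Icc_choose_mul_pow_mul_pow_le (by positivity) hp₁ hnp
          (Nat.ceil_pos.2 (by positivity)) (hBt.trans (Nat.le_ceil _))
    _ ≤ _ := div_natCeil_pow_natCeil_le_rpow hB.le (by positivity) hBt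

/-- Tail decay in `MPA_f` with linear edge growth (from the proof of
Proposition `prop:mainstep1`): assume `c₁t ≤ f(t) ≤ c₂t` and
`c₁t² ≤ 2F(t) ≤ c₂t²`, fix `α ∈ (1/2, 1)`, and suppose a node has degree `d`
with `b₁t < d < b₂t`.  Then the probability that it receives at least `t^α` new
edges at stage `t+1` (a binomial `b(f(t), d/(2F(t)))` tail) is at most
`(B/t^α)^{t^α}` for a constant `B` and all large `t`. -/
theorem mpa_tail_decay
    (f : ℕ → ℕ) (F : ℕ → ℕ) (hF : ∀ t, F t = ∑ i ∈ Finset.range t, f i)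
    (c₁ c₂ : ℝ) (hc₁ : 0 < c₁) (hc : c₁ ≤ c₂)
    (hf : ∀ t : ℕ, 1 ≤ t → c₁ * t ≤ (f t : ℝ) ∧ (f t : ℝ) ≤ c₂ * t)
    (hF2 : ∀ t : ℕ, 1 ≤ t → c₁ * t ^ 2 ≤ 2 * (F t : ℝ) ∧ 2 * (F t : ℝ) ≤ c₂ * t ^ 2)
    (α : ℝ) (hα : 1 / 2 < α) (hα1 : α < 1)
    (b₁ b₂ : ℝ) (hb₁ : 0 < b₁) (hb : b₁ < b₂) :
    ∃ B : ℝ, 0 < B ∧ ∃ N : ℕ, ∀ t : ℕ, N ≤ t → ∀ d : ℝ,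
      b₁ * t < d → d < b₂ * t →
      ∑ k ∈ Finset.Icc ⌈(t : ℝ) ^ α⌉₊ (f t),
          ((f t).choose k : ℝ) * (d / (2 * F t)) ^ k
            * (1 - d / (2 * F t)) ^ (f t - k)
        ≤ (B / (t : ℝ) ^ α) ^ ((t : ℝ) ^ α) :=
  mpa_tail_decay_general f F c₁ c₂ hc₁ hc hf hF2 α hα b₁ b₂ hb₁ hb
end
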